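/- arXiv:2505.24067 — 5 statements merged into one kernel-verified Lean document; each statement's English description precedes it below -/
import Mathlib

section
/- α-approximation via tight dual constraints (core of Corollary 4.2): let α = max_{T ∈ 𝒯} |T|. If y : 𝒯 → ℝ is dual feasible, A ⊆ E is a hitting set, and every element of A has a tight dual constraint, i.e. ∑_{T ∈ 𝒯, e ∈ T} y_T = w_e for every e ∈ A, then for every hitting set A' ⊆ E one has ∑_{e ∈ A} w_e ≤ α * ∑_{e ∈ A'} w_e. -/
/-- α-approximation via tight dual constraints: with `α = max_{T ∈ 𝒯} |T|`,
if `y` is dual feasible, `A` is a hitting set and every element of `A` has a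
tight dual constraint, then `∑_{e ∈ A} w e ≤ α * ∑_{e ∈ A'} w e` for every
hitting set `A'`. -/
theorem hittingSet_alpha_approximation {γ : Type*} [DecidableEq γ]
    (E : Finset γ) (w : γ → ℝ) (𝒯 : Finset (Finset γ))
    (hw : ∀ e ∈ E, 0 ≤ w e)
    (h𝒯sub : ∀ T ∈ 𝒯, T ⊆ E) (h𝒯ne : ∀ T ∈ 𝒯, T.Nonempty)
    (α : ℝ) (hα : α = (𝒯.sup Finset.card : ℕ))
    (y : Finset γ → ℝ)
    (hy0 : ∀ T ∈ 𝒯, 0 ≤ y T)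
    (hyfeas : ∀ e ∈ E, ∑ T ∈ 𝒯.filter (fun T => e ∈ T), y T ≤ w e)
    (A : Finset γ) (hAE : A ⊆ E)
    (hA : ∀ T ∈ 𝒯, (A ∩ T).Nonempty)
    (htight : ∀ e ∈ A, ∑ T ∈ 𝒯.filter (fun T => e ∈ T), y T = w e) :
    ∀ A' ⊆ E, (∀ T ∈ 𝒯, (A' ∩ T).Nonempty) →
      ∑ e ∈ A, w e ≤ α * ∑ e ∈ A', w e := by
  intro A' hA'E hA'
  have hα0 : (0:ℝ) ≤ α := by rw [hα]; positivity
  -- key identity for any set B: ∑_{e∈B} ∑_{T∋e} y T = ∑_T (B∩T).card * y T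
  have key : ∀ B : Finset γ,
      ∑ e ∈ B, ∑ T ∈ 𝒯.filter (fun T => e ∈ T), y T
        = ∑ T ∈ 𝒯, ((B ∩ T).card : ℝ) * y T := by
    intro B
    have : ∀ e ∈ B, ∑ T ∈ 𝒯.filter (fun T => e ∈ T), y T
        = ∑ T ∈ 𝒯, if e ∈ T then y T else 0 := by
      intro e _; rw [Finset.sum_filter]
    rw [Finset.sum_congr rfl this, Finset.sum_comm]
    refine Finset.sum_congr rfl fun T _ => ?_
    rw [Finset.sum_ite_mem, Finset.sum_const, nsmul_eq_mul]
  calc ∑ e ∈ A, w e = ∑ e ∈ A, ∑ T ∈ 𝒯.filter (fun T => e ∈ T), y T :=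
        (Finset.sum_congr rfl htight).symm
    _ = ∑ T ∈ 𝒯, ((A ∩ T).card : ℝ) * y T := key A
    _ ≤ ∑ T ∈ 𝒯, α * y T := by
        refine Finset.sum_le_sum fun T hT => ?_
        refine mul_le_mul_of_nonneg_right ?_ (hy0 T hT)
        rw [hα]
        exact_mod_cast (Finset.card_le_card (Finset.inter_subset_right)).trans
          (Finset.le_sup hT)
    _ = α * ∑ T ∈ 𝒯, y T := by rw [Finset.mul_sum]
    _ ≤ α * ∑ T ∈ 𝒯, ((A' ∩ T).card : ℝ) * y T := by
        refine mul_le_mul_of_nonneg_left (Finset.sum_le_sum fun T hT => ?_) hα0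
        have h1 : (1:ℝ) ≤ ((A' ∩ T).card : ℝ) := by
          exact_mod_cast Finset.card_pos.mpr (hA' T hT)
        nlinarith [hy0 T hT]
    _ = α * ∑ e ∈ A', ∑ T ∈ 𝒯.filter (fun T => e ∈ T), y T := by rw [key A']
    _ ≤ α * ∑ e ∈ A', w e := by
        refine mul_le_mul_of_nonneg_left
          (Finset.sum_le_sum fun e he => hyfeas e (hA'E he)) hα0
end

section
/- α/(1−ε)-approximation via ε-relaxed tight dual constraints: let α = max_{T ∈ 𝒯} |T| and let ε ∈ [0,1). If y : 𝒯 → ℝ is dual feasible, A ⊆ E is a hitting set, and ∑_{T ∈ 𝒯, e ∈ T} y_T ≥ (1 − ε) * w_e for every e ∈ A, then for every hitting set A' ⊆ E one has ∑_{e ∈ A} w_e ≤ (α / (1 − ε)) * ∑_{e ∈ A'} w_e. -/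
lemma swap_sum {γ : Type*} [DecidableEq γ] (𝒯 : Finset (Finset γ)) (S : Finset γ)
    (y : Finset γ → ℝ) :
    ∑ e ∈ S, ∑ T ∈ 𝒯.filter (fun T => e ∈ T), y T
      = ∑ T ∈ 𝒯, ((S ∩ T).card : ℝ) * y T := by
  simp only [Finset.sum_filter]
  rw [Finset.sum_comm]
  refine Finset.sum_congr rfl fun T hT => ?_
  rw [Finset.sum_ite_mem, Finset.sum_const, nsmul_eq_mul]

/-- α/(1−ε)-approximation via ε-relaxed tight dual constraints: with
`α = max_{T ∈ 𝒯} |T|` and `ε ∈ [0,1)`, if `y` is dual feasible, `A` is a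
hitting set and `∑_{T ∋ e} y T ≥ (1 − ε) * w e` for every `e ∈ A`, then
`∑_{e ∈ A} w e ≤ (α / (1 − ε)) * ∑_{e ∈ A'} w e` for every hitting set `A'`. -/
theorem hittingSet_eps_approximation {γ : Type*} [DecidableEq γ]
    (E : Finset γ) (w : γ → ℝ) (𝒯 : Finset (Finset γ))
    (hw : ∀ e ∈ E, 0 ≤ w e)
    (h𝒯sub : ∀ T ∈ 𝒯, T ⊆ E) (h𝒯ne : ∀ T ∈ 𝒯, T.Nonempty)
    (α : ℝ) (hα : α = (𝒯.sup Finset.card : ℕ))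
    (ε : ℝ) (hε0 : 0 ≤ ε) (hε1 : ε < 1)
    (y : Finset γ → ℝ)
    (hy0 : ∀ T ∈ 𝒯, 0 ≤ y T)
    (hyfeas : ∀ e ∈ E, ∑ T ∈ 𝒯.filter (fun T => e ∈ T), y T ≤ w e)
    (A : Finset γ) (hAE : A ⊆ E)
    (hA : ∀ T ∈ 𝒯, (A ∩ T).Nonempty)
    (htight : ∀ e ∈ A, (1 - ε) * w e ≤ ∑ T ∈ 𝒯.filter (fun T => e ∈ T), y T) :
    ∀ A' ⊆ E, (∀ T ∈ 𝒯, (A' ∩ T).Nonempty) →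
      ∑ e ∈ A, w e ≤ (α / (1 - ε)) * ∑ e ∈ A', w e := by
  intro A' hA'E hA'
  have hεpos : 0 < 1 - ε := by linarith
  have h1 : (1 - ε) * ∑ e ∈ A, w e ≤ ∑ T ∈ 𝒯, ((A ∩ T).card : ℝ) * y T := by
    rw [Finset.mul_sum, ← swap_sum]
    exact Finset.sum_le_sum htight
  have h2 : ∑ T ∈ 𝒯, ((A ∩ T).card : ℝ) * y T ≤ α * ∑ T ∈ 𝒯, y T := by
    rw [Finset.mul_sum]
    refine Finset.sum_le_sum fun T hT => ?_
    refine mul_le_mul_of_nonneg_right ?_ (hy0 T hT)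
    rw [hα]
    exact_mod_cast le_trans (Finset.card_le_card (Finset.inter_subset_right))
      (Finset.le_sup hT)
  have h3 : ∑ T ∈ 𝒯, y T ≤ ∑ e ∈ A', w e := by
    calc ∑ T ∈ 𝒯, y T ≤ ∑ T ∈ 𝒯, ((A' ∩ T).card : ℝ) * y T := by
          refine Finset.sum_le_sum fun T hT => ?_
          have h1 : (1 : ℝ) ≤ ((A' ∩ T).card : ℝ) := by
            exact_mod_cast Finset.card_pos.mpr (hA' T hT)
          nlinarith [hy0 T hT]
      _ = ∑ e ∈ A', ∑ T ∈ 𝒯.filter (fun T => e ∈ T), y T := (swap_sum 𝒯 A' y).symm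
      _ ≤ ∑ e ∈ A', w e := Finset.sum_le_sum fun e he => hyfeas e (hA'E he)
  have hαnn : 0 ≤ α := by rw [hα]; positivity
  rw [div_mul_eq_mul_div, le_div_iff₀ hεpos, mul_comm (∑ e ∈ A, w e)]
  calc (1 - ε) * ∑ e ∈ A, w e ≤ α * ∑ T ∈ 𝒯, y T := le_trans h1 h2
    _ ≤ α * ∑ e ∈ A', w e := mul_le_mul_of_nonneg_left h3 hαnn
end

section
/- 2-approximation for minimum vertex cover via a tight edge packing: if p is a feasible edge packing and C ⊆ V is a vertex cover such that every v ∈ C is tight, i.e. ∑_{e ∈ 𝓔, v ∈ e} p_e = w_v for every v ∈ C, then for every vertex cover C' ⊆ V one has ∑_{v ∈ C} w_v ≤ 2 * ∑_{v ∈ C'} w_v. -/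
lemma double_count {V : Type*} [Fintype V] [DecidableEq V]
    (E : Finset (Sym2 V)) (p : Sym2 V → ℝ) (S : Finset V) :
    ∑ v ∈ S, ∑ e ∈ E.filter (fun e => v ∈ e), p e
      = ∑ e ∈ E, (S.filter (fun v => v ∈ e)).card * p e := by
  have : ∀ v ∈ S, ∑ e ∈ E.filter (fun e => v ∈ e), p e
      = ∑ e ∈ E, if v ∈ e then p e else 0 := by
    intro v _
    rw [Finset.sum_filter]
  rw [Finset.sum_congr rfl this, Finset.sum_comm]
  refine Finset.sum_congr rfl fun e _ => ?_
  rw [← Finset.sum_filter, Finset.sum_const, nsmul_eq_mul]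

/-- 2-approximation for minimum vertex cover via a tight edge packing: if `p`
is a feasible edge packing and `C` is a vertex cover all of whose vertices are
tight, then `∑_{v ∈ C} w v ≤ 2 * ∑_{v ∈ C'} w v` for every vertex cover `C'`. -/
theorem vertexCover_two_approximation {V : Type*} [Fintype V] [DecidableEq V]
    (G : SimpleGraph V) [DecidableRel G.Adj]
    (w : V → ℝ) (hw : ∀ v, 0 ≤ w v)
    (p : Sym2 V → ℝ)
    (hp0 : ∀ e ∈ G.edgeFinset, 0 ≤ p e)
    (hpfeas : ∀ v : V, ∑ e ∈ G.edgeFinset.filter (fun e => v ∈ e), p e ≤ w v)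
    (C : Finset V) (hC : ∀ e ∈ G.edgeFinset, ∃ v ∈ C, v ∈ e)
    (htight : ∀ v ∈ C, ∑ e ∈ G.edgeFinset.filter (fun e => v ∈ e), p e = w v) :
    ∀ C' : Finset V, (∀ e ∈ G.edgeFinset, ∃ v ∈ C', v ∈ e) →
      ∑ v ∈ C, w v ≤ 2 * ∑ v ∈ C', w v := by
  intro C' hC'
  have h1 : ∑ v ∈ C, w v ≤ 2 * ∑ e ∈ G.edgeFinset, p e := by
    have : ∑ v ∈ C, w v
        = ∑ e ∈ G.edgeFinset, (C.filter (fun v => v ∈ e)).card * p e := by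
      rw [← double_count]
      exact Finset.sum_congr rfl fun v hv => (htight v hv).symm
    rw [this, Finset.mul_sum]
    refine Finset.sum_le_sum fun e he => ?_
    have hcard : (C.filter (fun v => v ∈ e)).card ≤ 2 := by
      induction e with
      | h a b =>
        have : C.filter (fun v => v ∈ s(a, b)) ⊆ {a, b} := by
          intro v hv
          simp only [Finset.mem_filter, Sym2.mem_iff] at hv
          simp [hv.2]
        calc (C.filter (fun v => v ∈ s(a, b))).card ≤ ({a, b} : Finset V).card :=
              Finset.card_le_card this
          _ ≤ 2 := Finset.card_insert_le _ _ |>.trans (by simp)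
    have hc : ((C.filter (fun v => v ∈ e)).card : ℝ) ≤ 2 := by exact_mod_cast hcard
    nlinarith [hp0 e he]
  have h2 : ∑ e ∈ G.edgeFinset, p e ≤ ∑ v ∈ C', w v := by
    have : ∑ e ∈ G.edgeFinset, p e
        ≤ ∑ e ∈ G.edgeFinset, (C'.filter (fun v => v ∈ e)).card * p e := by
      refine Finset.sum_le_sum fun e he => ?_
      obtain ⟨v, hv, hve⟩ := hC' e he
      have hcard : 1 ≤ (C'.filter (fun v => v ∈ e)).card := by
        refine Finset.card_pos.mpr ⟨v, ?_⟩
        simp [hv, hve]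
      have hc : (1:ℝ) ≤ ((C'.filter (fun v => v ∈ e)).card : ℝ) := by exact_mod_cast hcard
      nlinarith [hp0 e he]
    refine this.trans ?_
    rw [← double_count]
    exact Finset.sum_le_sum fun v _ => hpfeas v
  linarith
end

section
/- Accumulated dual feasibility of the primal-dual algorithm: let (E, w, 𝒯) be a hitting set instance. Suppose r⁰ = w and for k = 0, …, K−1 one has r^{k+1}_e = r^k_e − ∑_{T ∈ 𝒱_k, e ∈ T} δ^k_T, where each 𝒱_k ⊆ 𝒯 is a collection all of whose members T satisfy r^k_e > 0 for every e ∈ T, d^k_e = |{T ∈ 𝒱_k : e ∈ T}|, and δ^k_T = min_{e ∈ T} (r^k_e / d^k_e). Define y_T = ∑_{k : T ∈ 𝒱_k} δ^k_T for each T ∈ 𝒯. Then for every k ≤ K and every e ∈ E, r^k_e ≥ 0 and r^K_e = w_e − ∑_{T ∈ 𝒯, e ∈ T} y_T; in particular y is dual feasible. -/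
/-- Accumulated dual feasibility of the primal-dual algorithm: running the
inner update for `K` rounds starting from `r⁰ = w`, all residuals stay
nonnegative, the final residual of each element equals its weight minus the
total dual value of the sets containing it, and the accumulated dual solution
`y` is dual feasible. -/
theorem primalDual_accumulated_dual_feasible {γ : Type*} [DecidableEq γ]
    (E : Finset γ) (w : γ → ℝ) (𝒯 : Finset (Finset γ))
    (hw : ∀ e ∈ E, 0 ≤ w e)
    (h𝒯sub : ∀ T ∈ 𝒯, T ⊆ E) (h𝒯ne : ∀ T ∈ 𝒯, T.Nonempty)
    (K : ℕ) (r : ℕ → γ → ℝ) (𝒱 : ℕ → Finset (Finset γ))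
    (h𝒱 : ∀ k < K, 𝒱 k ⊆ 𝒯)
    (hpos : ∀ k < K, ∀ T ∈ 𝒱 k, ∀ e ∈ T, 0 < r k e)
    (d : ℕ → γ → ℕ) (hd : ∀ k e, d k e = ((𝒱 k).filter (fun T => e ∈ T)).card)
    (δ : ℕ → Finset γ → ℝ)
    (hδ : ∀ k (hk : k < K), ∀ T (hT : T ∈ 𝒱 k),
      δ k T = T.inf' (h𝒯ne T (h𝒱 k hk hT)) (fun e => r k e / (d k e : ℝ)))
    (hr0 : ∀ e, r 0 e = w e)
    (hrec : ∀ k < K, ∀ e,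
      r (k + 1) e = r k e - ∑ T ∈ (𝒱 k).filter (fun T => e ∈ T), δ k T)
    (y : Finset γ → ℝ)
    (hy : ∀ T, y T = ∑ k ∈ (Finset.range K).filter (fun k => T ∈ 𝒱 k), δ k T) :
    (∀ k ≤ K, ∀ e ∈ E, 0 ≤ r k e) ∧
      (∀ e ∈ E, r K e = w e - ∑ T ∈ 𝒯.filter (fun T => e ∈ T), y T) ∧
      (∀ T ∈ 𝒯, 0 ≤ y T) ∧
      (∀ e ∈ E, ∑ T ∈ 𝒯.filter (fun T => e ∈ T), y T ≤ w e) := by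
  -- degree is positive for elements of a violated set
  have hdpos : ∀ k, ∀ T ∈ 𝒱 k, ∀ e ∈ T, 0 < d k e := by
    intro k T hT e he
    rw [hd]
    exact Finset.card_pos.2 ⟨T, Finset.mem_filter.2 ⟨hT, he⟩⟩
  -- increments are nonnegative
  have hδnn : ∀ k, k < K → ∀ T ∈ 𝒱 k, 0 ≤ δ k T := by
    intro k hk T hT
    rw [hδ k hk T hT]
    apply Finset.le_inf'
    intro e he
    exact div_nonneg (hpos k hk T hT e he).le (Nat.cast_nonneg _)
  -- the total decrement at one round is at most the current residual
  have hsum_le : ∀ k, k < K → ∀ e, 0 ≤ r k e →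
      ∑ T ∈ (𝒱 k).filter (fun T => e ∈ T), δ k T ≤ r k e := by
    intro k hk e hre
    rcases ((𝒱 k).filter (fun T => e ∈ T)).eq_empty_or_nonempty with h | h
    · simp [h, hre]
    · obtain ⟨T0, hT0⟩ := h
      have hT0𝒱 := (Finset.mem_filter.1 hT0).1
      have heT0 := (Finset.mem_filter.1 hT0).2
      have hdp : 0 < d k e := hdpos k T0 hT0𝒱 e heT0
      have hbound : ∀ T ∈ (𝒱 k).filter (fun T => e ∈ T),
          δ k T ≤ r k e / (d k e : ℝ) := by
        intro T hT
        have hT𝒱 := (Finset.mem_filter.1 hT).1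
        have heT := (Finset.mem_filter.1 hT).2
        rw [hδ k hk T hT𝒱]
        exact Finset.inf'_le _ heT
      calc ∑ T ∈ (𝒱 k).filter (fun T => e ∈ T), δ k T
          ≤ ∑ _T ∈ (𝒱 k).filter (fun T => e ∈ T), r k e / (d k e : ℝ) :=
            Finset.sum_le_sum hbound
        _ = (d k e : ℝ) * (r k e / (d k e : ℝ)) := by
            rw [Finset.sum_const, nsmul_eq_mul, hd]
        _ = r k e := by
            field_simp
  -- nonnegativity of all residuals
  have hnn : ∀ k, k ≤ K → ∀ e ∈ E, 0 ≤ r k e := by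
    intro k
    induction k with
    | zero => intro _ e he; rw [hr0]; exact hw e he
    | succ k ih =>
      intro hk e he
      have hk' : k < K := hk
      have h0 : 0 ≤ r k e := ih hk'.le e he
      rw [hrec k hk' e, sub_nonneg]
      exact hsum_le k hk' e h0
  -- telescoping formula
  have htel : ∀ n, n ≤ K → ∀ e,
      r n e = r 0 e - ∑ k ∈ Finset.range n,
        ∑ T ∈ (𝒱 k).filter (fun T => e ∈ T), δ k T := by
    intro n
    induction n with
    | zero => intro _ e; simp
    | succ n ih =>
      intro hn e
      have hn' : n < K := hn
      rw [hrec n hn' e, ih hn'.le e, Finset.sum_range_succ]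
      ring
  -- swap the order of summation
  have hswap : ∀ e,
      ∑ k ∈ Finset.range K, ∑ T ∈ (𝒱 k).filter (fun T => e ∈ T), δ k T
        = ∑ T ∈ 𝒯.filter (fun T => e ∈ T), y T := by
    intro e
    have step1 : ∀ k ∈ Finset.range K,
        ∑ T ∈ (𝒱 k).filter (fun T => e ∈ T), δ k T
          = ∑ T ∈ 𝒯.filter (fun T => e ∈ T), if T ∈ 𝒱 k then δ k T else 0 := by
      intro k hk
      rw [← Finset.sum_filter]
      congr 1
      ext T
      simp only [Finset.mem_filter]
      constructor
      · rintro ⟨h1, h2⟩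
        exact ⟨⟨h𝒱 k (Finset.mem_range.1 hk) h1, h2⟩, h1⟩
      · rintro ⟨⟨_, h2⟩, h1⟩
        exact ⟨h1, h2⟩
    rw [Finset.sum_congr rfl step1, Finset.sum_comm]
    apply Finset.sum_congr rfl
    intro T _
    rw [hy, Finset.sum_filter]
  have hformula : ∀ e, r K e = w e - ∑ T ∈ 𝒯.filter (fun T => e ∈ T), y T := by
    intro e
    rw [htel K le_rfl e, hswap e, hr0]
  refine ⟨hnn, fun e _ => hformula e, ?_, ?_⟩
  · intro T _
    rw [hy]
    apply Finset.sum_nonneg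
    intro k hk
    have hk' := Finset.mem_filter.1 hk
    exact hδnn k (Finset.mem_range.1 hk'.1) T hk'.2
  · intro e he
    have := hnn K le_rfl e he
    rw [hformula e] at this
    linarith
end

section
/- Correctness and approximation guarantee of the uniform-increase primal-dual algorithm (algorithmic content of Corollary 4.2): let (E, w, 𝒯) be a hitting set instance with w_e > 0 for all e ∈ E, and let α = max_{T ∈ 𝒯} |T|. Consider the algorithm that maintains A ⊆ E and r : E → ℝ, initialized as A = ∅ and r = w, and while some T ∈ 𝒯 satisfies A ∩ T = ∅, lets 𝒱 = {T ∈ 𝒯 : A ∩ T = ∅}, computes d_e = |{T ∈ 𝒱 : e ∈ T}|, δ_T = min_{e ∈ T} (r_e / d_e) for T ∈ 𝒱, Δ = min_{T ∈ 𝒱} δ_T, updates r_e ← r_e − d_e * Δ for all e ∉ A, and adds all elements with r_e = 0 to A. Then the algorithm terminates after at most |E| iterations of the while loop, its output A is a hitting set, and ∑_{e ∈ A} w_e ≤ α * ∑_{e ∈ A'} w_e for every hitting set A' ⊆ E. -/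
open scoped Classical

/-- One iteration of the while loop of the uniform-increase primal-dual
algorithm for the hitting set problem, acting on the state `(A, r)`:
`𝒱` is the family of not-yet-hit sets, `d e` the number of members of `𝒱`
containing `e`, `δ T = min_{e ∈ T} (r e / d e)`, `Δ = min_{T ∈ 𝒱} δ T`; the
residual of each `e ∉ A` drops by `d e * Δ`, and all elements of `E` whose
residual becomes `0` are added to `A`. -/
noncomputable def pdStep {γ : Type*} [DecidableEq γ] (E : Finset γ)
    (𝒯 : Finset (Finset γ)) (s : Finset γ × (γ → ℝ)) : Finset γ × (γ → ℝ) :=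
  let A := s.1
  let r := s.2
  let 𝒱 := 𝒯.filter fun T => A ∩ T = ∅
  let d : γ → ℕ := fun e => (𝒱.filter fun T => e ∈ T).card
  let δ : Finset γ → ℝ := fun T =>
    if h : T.Nonempty then T.inf' h fun e => r e / (d e : ℝ) else 0
  let Δ : ℝ := if h : 𝒱.Nonempty then 𝒱.inf' h δ else 0
  let r' : γ → ℝ := fun e => if e ∈ A then r e else r e - (d e : ℝ) * Δ
  (A ∪ E.filter (fun e => r' e = 0), r')

/-- The while loop of the primal-dual algorithm, with an explicit bound
(`fuel`) on the number of iterations: while some `T ∈ 𝒯` satisfies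
`A ∩ T = ∅`, perform `pdStep`. -/
noncomputable def pdLoop {γ : Type*} [DecidableEq γ] (E : Finset γ)
    (𝒯 : Finset (Finset γ)) :
    ℕ → Finset γ × (γ → ℝ) → Finset γ × (γ → ℝ)
  | 0, s => s
  | k + 1, s =>
    if ∃ T ∈ 𝒯, s.1 ∩ T = ∅ then pdLoop E 𝒯 k (pdStep E 𝒯 s) else s

/-!
The algorithm is a primal-dual method. Alongside `A` it implicitly maintains a packing
`y ≥ 0` (each step raises `y T` by `Δ` for every unhit `T`) whose reduced costs
`r e = w e - ∑_{T ∋ e} y T` stay nonnegative, and `A` consists of elements with `r e = 0`.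
Each step makes a new element tight, so the loop ends within `|E|` steps with a hitting set.
Tightness gives `w(A) = ∑_T |A ∩ T| y T ≤ α ∑_T y T`, and weak duality bounds `∑_T y T`
by `w(A')` for every hitting set `A'`.
-/

section HittingSet

variable {γ : Type*} [DecidableEq γ]

/-- The left-hand side `∑_{T ∋ e} y_T` of the dual packing constraint of `e`. -/
def dualLoad (𝒯 : Finset (Finset γ)) (y : Finset γ → ℝ) (e : γ) : ℝ :=
  ∑ T ∈ 𝒯 with e ∈ T, y T

theorem sum_dualLoad (𝒯 : Finset (Finset γ)) (y : Finset γ → ℝ) (B : Finset γ) :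
    ∑ e ∈ B, dualLoad 𝒯 y e = ∑ T ∈ 𝒯, ((B ∩ T).card : ℝ) * y T := by
  simp only [dualLoad, Finset.sum_filter]
  rw [Finset.sum_comm]
  refine Finset.sum_congr rfl fun T _ => ?_
  rw [← Finset.sum_filter, Finset.filter_mem_eq_inter, Finset.sum_const, nsmul_eq_mul]

theorem sum_le_sup_card_mul_sum_of_dualLoad_eq {𝒯 : Finset (Finset γ)} {w : γ → ℝ}
    {y : Finset γ → ℝ} {A : Finset γ} (hy : ∀ T, 0 ≤ y T)
    (htight : ∀ e ∈ A, w e = dualLoad 𝒯 y e) :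
    ∑ e ∈ A, w e ≤ (𝒯.sup Finset.card : ℕ) * ∑ T ∈ 𝒯, y T :=
  calc ∑ e ∈ A, w e = ∑ T ∈ 𝒯, ((A ∩ T).card : ℝ) * y T := by
        rw [← sum_dualLoad]; exact Finset.sum_congr rfl htight
    _ ≤ ∑ T ∈ 𝒯, ((𝒯.sup Finset.card : ℕ) : ℝ) * y T := by
        gcongr with T hT
        · exact hy T
        · exact (Finset.card_le_card Finset.inter_subset_right).trans (Finset.le_sup hT)
    _ = _ := by rw [Finset.mul_sum]

theorem sum_le_sum_of_dualLoad_le {𝒯 : Finset (Finset γ)} {w : γ → ℝ}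
    {y : Finset γ → ℝ} {A : Finset γ} (hy : ∀ T, 0 ≤ y T)
    (hfeas : ∀ e ∈ A, dualLoad 𝒯 y e ≤ w e) (hA : ∀ T ∈ 𝒯, (A ∩ T).Nonempty) :
    ∑ T ∈ 𝒯, y T ≤ ∑ e ∈ A, w e :=
  calc ∑ T ∈ 𝒯, y T ≤ ∑ T ∈ 𝒯, ((A ∩ T).card : ℝ) * y T := by
        gcongr with T hT
        refine le_mul_of_one_le_left (hy T) ?_
        exact_mod_cast Finset.card_pos.mpr (hA T hT)
    _ = ∑ e ∈ A, dualLoad 𝒯 y e := (sum_dualLoad 𝒯 y A).symm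
    _ ≤ ∑ e ∈ A, w e := Finset.sum_le_sum hfeas

/-- The family `𝒱` of the algorithm. -/
def unhit (𝒯 : Finset (Finset γ)) (A : Finset γ) : Finset (Finset γ) :=
  𝒯.filter fun T => A ∩ T = ∅

def unhitDegree (𝒯 : Finset (Finset γ)) (A : Finset γ) (e : γ) : ℕ :=
  ((unhit 𝒯 A).filter fun T => e ∈ T).card

/-- The increase `Δ` of the algorithm. -/
noncomputable def pdIncrement (𝒯 : Finset (Finset γ)) (s : Finset γ × (γ → ℝ)) : ℝ :=
  if h : (unhit 𝒯 s.1).Nonempty then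
    (unhit 𝒯 s.1).inf' h fun T =>
      if hT : T.Nonempty then T.inf' hT fun e => s.2 e / (unhitDegree 𝒯 s.1 e : ℝ) else 0
  else 0

noncomputable def pdResidual (𝒯 : Finset (Finset γ)) (s : Finset γ × (γ → ℝ)) (e : γ) : ℝ :=
  if e ∈ s.1 then s.2 e else s.2 e - unhitDegree 𝒯 s.1 e * pdIncrement 𝒯 s

theorem pdStep_eq (E : Finset γ) (𝒯 : Finset (Finset γ)) (s : Finset γ × (γ → ℝ)) :
    pdStep E 𝒯 s = (s.1 ∪ E.filter (fun e => pdResidual 𝒯 s e = 0), pdResidual 𝒯 s) :=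
  rfl

theorem notMem_of_mem_unhit {𝒯 : Finset (Finset γ)} {A T : Finset γ} {e : γ}
    (hT : T ∈ unhit 𝒯 A) (he : e ∈ T) : e ∉ A := fun heA => by
  have hTA := (Finset.mem_filter.mp hT).2
  exact Finset.notMem_empty e (hTA ▸ Finset.mem_inter.mpr ⟨heA, he⟩)

theorem unhitDegree_eq_zero_of_mem {𝒯 : Finset (Finset γ)} {A : Finset γ} {e : γ}
    (he : e ∈ A) : unhitDegree 𝒯 A e = 0 :=
  Finset.card_eq_zero.mpr <| Finset.filter_eq_empty_iff.mpr fun _ hT heT =>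
    notMem_of_mem_unhit hT heT he

theorem unhitDegree_pos {𝒯 : Finset (Finset γ)} {A T : Finset γ} {e : γ}
    (hT : T ∈ unhit 𝒯 A) (he : e ∈ T) : 0 < unhitDegree 𝒯 A e :=
  Finset.card_pos.mpr ⟨T, Finset.mem_filter.mpr ⟨hT, he⟩⟩

theorem pdIncrement_le_div {𝒯 : Finset (Finset γ)} {s : Finset γ × (γ → ℝ)} {T : Finset γ}
    {e : γ} (hT : T ∈ unhit 𝒯 s.1) (he : e ∈ T) :
    pdIncrement 𝒯 s ≤ s.2 e / unhitDegree 𝒯 s.1 e := by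
  rw [pdIncrement, dif_pos ⟨T, hT⟩]
  refine (Finset.inf'_le _ hT).trans ?_
  rw [dif_pos ⟨e, he⟩]
  exact Finset.inf'_le _ he

theorem exists_pdIncrement_eq_div {𝒯 : Finset (Finset γ)} {s : Finset γ × (γ → ℝ)}
    (h𝒱 : (unhit 𝒯 s.1).Nonempty) (h𝒯ne : ∀ T ∈ 𝒯, T.Nonempty) :
    ∃ T ∈ unhit 𝒯 s.1, ∃ e ∈ T, pdIncrement 𝒯 s = s.2 e / unhitDegree 𝒯 s.1 e := by
  obtain ⟨T, hT, hΔ⟩ := Finset.exists_mem_eq_inf' h𝒱 fun T =>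
    if hT : T.Nonempty then T.inf' hT fun e => s.2 e / (unhitDegree 𝒯 s.1 e : ℝ) else 0
  have hTne : T.Nonempty := h𝒯ne T (Finset.mem_filter.mp hT).1
  obtain ⟨e, he, hδ⟩ := Finset.exists_mem_eq_inf' hTne fun e =>
    s.2 e / (unhitDegree 𝒯 s.1 e : ℝ)
  refine ⟨T, hT, e, he, ?_⟩
  rw [pdIncrement, dif_pos h𝒱, hΔ, dif_pos hTne, hδ]

theorem unhitDegree_mul_pdIncrement_le {𝒯 : Finset (Finset γ)} {s : Finset γ × (γ → ℝ)}
    {e : γ} (hr : 0 ≤ s.2 e) : unhitDegree 𝒯 s.1 e * pdIncrement 𝒯 s ≤ s.2 e := by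
  rcases Nat.eq_zero_or_pos (unhitDegree 𝒯 s.1 e) with hd | hd
  · simpa [hd] using hr
  · obtain ⟨T, hT⟩ := Finset.card_pos.mp hd
    obtain ⟨hT, he⟩ := Finset.mem_filter.mp hT
    rw [← le_div_iff₀' (by exact_mod_cast hd)]
    exact pdIncrement_le_div hT he

theorem pdResidual_eq (𝒯 : Finset (Finset γ)) (s : Finset γ × (γ → ℝ)) (e : γ) :
    pdResidual 𝒯 s e = s.2 e - unhitDegree 𝒯 s.1 e * pdIncrement 𝒯 s := by
  by_cases he : e ∈ s.1
  · simp [pdResidual, he, unhitDegree_eq_zero_of_mem he]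
  · simp [pdResidual, he]

theorem dualLoad_add_unhit (𝒯 : Finset (Finset γ)) (y : Finset γ → ℝ) (A : Finset γ)
    (Δ : ℝ) (e : γ) :
    dualLoad 𝒯 (fun T => y T + if T ∈ unhit 𝒯 A then Δ else 0) e =
      dualLoad 𝒯 y e + unhitDegree 𝒯 A e * Δ := by
  have hinter : (𝒯.filter fun T => e ∈ T) ∩ unhit 𝒯 A = (unhit 𝒯 A).filter fun T => e ∈ T := by
    ext T
    simp only [unhit, Finset.mem_inter, Finset.mem_filter]
    tauto
  rw [dualLoad, Finset.sum_add_distrib, Finset.sum_ite_mem, hinter, Finset.sum_const,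
    nsmul_eq_mul, unhitDegree, dualLoad]

/-- `s.2` is the vector of reduced costs `w - dualLoad 𝒯 y` of a nonnegative dual `y`,
and `s.1` consists of tight elements of `E`. -/
structure PDInvariant (E : Finset γ) (w : γ → ℝ) (𝒯 : Finset (Finset γ))
    (s : Finset γ × (γ → ℝ)) : Prop where
  subset : s.1 ⊆ E
  residual_nonneg : ∀ e ∈ E, 0 ≤ s.2 e
  residual_eq_zero : ∀ e ∈ s.1, s.2 e = 0
  exists_dual : ∃ y : Finset γ → ℝ, (∀ T, 0 ≤ y T) ∧ ∀ e ∈ E, s.2 e = w e - dualLoad 𝒯 y e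

namespace PDInvariant

variable {E : Finset γ} {w : γ → ℝ} {𝒯 : Finset (Finset γ)} {s : Finset γ × (γ → ℝ)}

theorem init (hw : ∀ e ∈ E, 0 ≤ w e) : PDInvariant E w 𝒯 (∅, w) :=
  ⟨Finset.empty_subset E, hw, by simp, 0, fun _ => le_rfl, fun e _ => by simp [dualLoad]⟩

theorem pdIncrement_nonneg (h : PDInvariant E w 𝒯 s) (h𝒯sub : ∀ T ∈ 𝒯, T ⊆ E)
    (h𝒯ne : ∀ T ∈ 𝒯, T.Nonempty) : 0 ≤ pdIncrement 𝒯 s := by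
  by_cases h𝒱 : (unhit 𝒯 s.1).Nonempty
  · obtain ⟨T, hT, e, he, hΔ⟩ := exists_pdIncrement_eq_div h𝒱 h𝒯ne
    rw [hΔ]
    exact div_nonneg (h.residual_nonneg e (h𝒯sub T (Finset.mem_filter.mp hT).1 he))
      (Nat.cast_nonneg _)
  · rw [pdIncrement, dif_neg h𝒱]

/-- Raising the dual variable of every unhit set by `Δ` lowers the reduced cost of `e`
by exactly `unhitDegree 𝒯 s.1 e * Δ`. -/
theorem pdStep (h : PDInvariant E w 𝒯 s) (h𝒯sub : ∀ T ∈ 𝒯, T ⊆ E)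
    (h𝒯ne : ∀ T ∈ 𝒯, T.Nonempty) : PDInvariant E w 𝒯 (pdStep E 𝒯 s) := by
  obtain ⟨y, hy, hr⟩ := h.exists_dual
  have hΔ := h.pdIncrement_nonneg h𝒯sub h𝒯ne
  rw [pdStep_eq]
  refine ⟨Finset.union_subset h.subset (Finset.filter_subset _ _), fun e he => ?_,
    fun e he => ?_, fun T => y T + if T ∈ unhit 𝒯 s.1 then pdIncrement 𝒯 s else 0,
    fun T => add_nonneg (hy T) (by split_ifs <;> simp [hΔ]), fun e he => ?_⟩
  · dsimp only
    rw [pdResidual_eq, sub_nonneg]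
    exact unhitDegree_mul_pdIncrement_le (h.residual_nonneg e he)
  · rcases Finset.mem_union.mp he with he | he
    · simp [pdResidual, he, h.residual_eq_zero e he]
    · exact (Finset.mem_filter.mp he).2
  · dsimp only
    rw [pdResidual_eq, dualLoad_add_unhit, hr e he]
    ring

theorem pdLoop (h : PDInvariant E w 𝒯 s) (h𝒯sub : ∀ T ∈ 𝒯, T ⊆ E)
    (h𝒯ne : ∀ T ∈ 𝒯, T.Nonempty) (k : ℕ) : PDInvariant E w 𝒯 (pdLoop E 𝒯 k s) := by
  induction k generalizing s with
  | zero => exact h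
  | succ k ih =>
    rw [_root_.pdLoop]
    split_ifs
    · exact ih (h.pdStep h𝒯sub h𝒯ne)
    · exact h

end PDInvariant

/-- An element attaining the minimum `Δ = r e / d e` has reduced cost exactly `0` after the
step. -/
theorem ssubset_pdStep {E : Finset γ} {𝒯 : Finset (Finset γ)} {s : Finset γ × (γ → ℝ)}
    (h𝒯sub : ∀ T ∈ 𝒯, T ⊆ E) (h𝒯ne : ∀ T ∈ 𝒯, T.Nonempty)
    (h𝒱 : (unhit 𝒯 s.1).Nonempty) : s.1 ⊂ (pdStep E 𝒯 s).1 := by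
  obtain ⟨T, hT, e, he, hΔ⟩ := exists_pdIncrement_eq_div h𝒱 h𝒯ne
  have hd : (unhitDegree 𝒯 s.1 e : ℝ) ≠ 0 := by exact_mod_cast (unhitDegree_pos hT he).ne'
  have hres : pdResidual 𝒯 s e = 0 := by
    rw [pdResidual_eq, hΔ, mul_div_cancel₀ _ hd, sub_self]
  rw [pdStep_eq, Finset.ssubset_iff_of_subset Finset.subset_union_left]
  exact ⟨e, Finset.mem_union_right _ (Finset.mem_filter.mpr
    ⟨h𝒯sub T (Finset.mem_filter.mp hT).1 he, hres⟩), notMem_of_mem_unhit hT he⟩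

theorem not_exists_inter_eq_empty_pdLoop {E : Finset γ} {𝒯 : Finset (Finset γ)}
    (h𝒯sub : ∀ T ∈ 𝒯, T ⊆ E) (h𝒯ne : ∀ T ∈ 𝒯, T.Nonempty) {k : ℕ}
    {s : Finset γ × (γ → ℝ)} (hs : s.1 ⊆ E) (hk : E.card ≤ k + s.1.card) :
    ¬∃ T ∈ 𝒯, (pdLoop E 𝒯 k s).1 ∩ T = ∅ := by
  induction k generalizing s with
  | zero =>
    have hsE : s.1 = E := Finset.eq_of_subset_of_card_le hs (by omega)
    rintro ⟨T, hT, hTe⟩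
    rw [pdLoop, hsE, Finset.inter_eq_right.mpr (h𝒯sub T hT)] at hTe
    exact (h𝒯ne T hT).ne_empty hTe
  | succ k ih =>
    rw [pdLoop]
    split_ifs with h𝒱
    · have hcard := Finset.card_lt_card <|
        ssubset_pdStep (E := E) h𝒯sub h𝒯ne (Finset.filter_nonempty_iff.mpr h𝒱)
      exact ih (Finset.union_subset hs (Finset.filter_subset _ _)) (by omega)
    · exact h𝒱

end HittingSet

/-- Correctness and approximation guarantee of the uniform-increase
primal-dual algorithm: starting from `A = ∅`, `r = w`, within at most `|E|`
iterations of the while loop the algorithm terminates (so the fuel `|E|` is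
never exhausted), its output `A` is a hitting set, and its weight is at most
`α = max_{T ∈ 𝒯} |T|` times the weight of any hitting set `A'`. -/
theorem pd_algorithm_correct {γ : Type*} [DecidableEq γ]
    (E : Finset γ) (w : γ → ℝ) (𝒯 : Finset (Finset γ))
    (hw : ∀ e ∈ E, 0 < w e)
    (h𝒯sub : ∀ T ∈ 𝒯, T ⊆ E) (h𝒯ne : ∀ T ∈ 𝒯, T.Nonempty)
    (α : ℝ) (hα : α = (𝒯.sup Finset.card : ℕ)) :
    ¬ (∃ T ∈ 𝒯, (pdLoop E 𝒯 E.card (∅, w)).1 ∩ T = ∅) ∧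
      (∀ T ∈ 𝒯, ((pdLoop E 𝒯 E.card (∅, w)).1 ∩ T).Nonempty) ∧
      ∀ A' ⊆ E, (∀ T ∈ 𝒯, (A' ∩ T).Nonempty) →
        ∑ e ∈ (pdLoop E 𝒯 E.card (∅, w)).1, w e ≤ α * ∑ e ∈ A', w e := by
  set A := (pdLoop E 𝒯 E.card (∅, w)).1
  have hdone : ¬∃ T ∈ 𝒯, A ∩ T = ∅ :=
    not_exists_inter_eq_empty_pdLoop h𝒯sub h𝒯ne (Finset.empty_subset E) (by simp)
  have hI := (PDInvariant.init fun e he => (hw e he).le).pdLoop h𝒯sub h𝒯ne E.card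
  obtain ⟨y, hy, hr⟩ := hI.exists_dual
  have htight : ∀ e ∈ A, w e = dualLoad 𝒯 y e := fun e he => by
    linarith [hr e (hI.subset he), hI.residual_eq_zero e he]
  refine ⟨hdone, fun T hT => Finset.nonempty_iff_ne_empty.mpr fun h => hdone ⟨T, hT, h⟩,
    fun A' hA'E hA' => ?_⟩
  have hfeas : ∀ e ∈ A', dualLoad 𝒯 y e ≤ w e := fun e he => by
    linarith [hr e (hA'E he), hI.residual_nonneg e (hA'E he)]
  subst hα
  calc ∑ e ∈ A, w e ≤ (𝒯.sup Finset.card : ℕ) * ∑ T ∈ 𝒯, y T :=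
        sum_le_sup_card_mul_sum_of_dualLoad_eq hy htight
    _ ≤ (𝒯.sup Finset.card : ℕ) * ∑ e ∈ A', w e := by
        gcongr
        exact sum_le_sum_of_dualLoad_le hy hfeas hA'
end
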